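/- Let F : ℝᵈ → ℝ be differentiable with L-Lipschitz gradient, let C ⊆ ℝᵈ be compact convex with 0 ∈ C and diameter R, let λ ≥ 0, η > 0, g ∈ ℝᵈ, and let w ∈ ℝᵈ with λw ∈ C if λ > 0. Let v ∈ C minimize ⟨g, ·⟩ over C, and set w' = (1 − λη)w + ηv, ε̂ = g − ∇F(w), and Ψ(w) = sup_{u ∈ C} ⟨−∇F(w), u − λw⟩. Then F(w') ≤ F(w) − η·Ψ(w) + η·R·‖ε̂‖ + (L/2)·η²·R². -/

import Mathlib

/-!
Write the step as `w' = w + η • (v - λ • w)`. Both `v` and `λ • w` lie in `C` (for `λ = 0`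
because `0 ∈ C`), so `‖v - λ • w‖ ≤ R`, and the smoothness descent inequality
`F y ≤ F x + ⟪∇F x, y - x⟫ + L/2 ‖y - x‖²` bounds `F w'`. The oracle minimizes `⟪g, ·⟫`
instead of `⟪∇F w, ·⟫`, so `v` maximizes `⟪-∇F w, ·⟫` over `C` only up to
`⟪g - ∇F w, u - v⟫ ≤ R ‖g - ∇F w‖`; this is the gap between `Ψ(w)` and `⟪-∇F w, v - λ • w⟫`.
-/

open RealInnerProductSpace

theorem mul_norm_sub_sq_le_mul_diam_sq {E F : Type*} [NormedAddCommGroup E]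
    [SeminormedAddCommGroup F] {f : E → F} {L : ℝ} (hL : ∀ x y, ‖f x - f y‖ ≤ L * ‖x - y‖)
    {C : Set E} (hC : Bornology.IsBounded C)
    {a b : E} (ha : a ∈ C) (hb : b ∈ C) :
    L * ‖a - b‖ ^ 2 ≤ L * Metric.diam C ^ 2 := by
  rcases le_or_gt 0 L with hL0 | hL0
  · rw [← dist_eq_norm]
    gcongr
    exact Metric.dist_le_diam_of_mem hC ha hb
  -- `L` is not assumed nonnegative, but a negative Lipschitz constant forces `E` to be trivial.
  · have : Subsingleton E := ⟨fun x y => by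
      by_contra hxy
      have := hL x y
      have : 0 < ‖x - y‖ := norm_pos_iff.2 (sub_ne_zero.2 hxy)
      nlinarith [norm_nonneg (f x - f y)]⟩
    simp [Subsingleton.elim a b, Metric.diam_subsingleton Set.subsingleton_of_subsingleton]

section

variable {E : Type*} [NormedAddCommGroup E] [InnerProductSpace ℝ E]

theorem real_inner_neg_sub_le_of_forall_inner_le {C : Set E} (hC : Bornology.IsBounded C)
    {g G u v z : E} (hu : u ∈ C) (hv : v ∈ C) (hmin : ∀ u ∈ C, ⟪g, v⟫ ≤ ⟪g, u⟫) :
    ⟪-G, u - z⟫ ≤ ⟪-G, v - z⟫ + Metric.diam C * ‖g - G‖ :=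
  calc ⟪-G, u - z⟫ = ⟪-G, v - z⟫ + (⟪g, v⟫ - ⟪g, u⟫) + ⟪g - G, u - v⟫ := by
        simp only [inner_sub_left, inner_sub_right, inner_neg_left]; ring
    _ ≤ ⟪-G, v - z⟫ + 0 + ‖g - G‖ * ‖u - v‖ := by
        gcongr
        · exact sub_nonpos.2 (hmin u hu)
        · exact real_inner_le_norm _ _
    _ ≤ ⟪-G, v - z⟫ + Metric.diam C * ‖g - G‖ := by
        rw [add_zero, mul_comm, ← dist_eq_norm]
        gcongr
        exact Metric.dist_le_diam_of_mem hC hu hv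

theorem ciSup_inner_neg_sub_le_of_forall_inner_le {C : Set E} (hC : Bornology.IsBounded C)
    {g G v z : E} (hv : v ∈ C) (hmin : ∀ u ∈ C, ⟪g, v⟫ ≤ ⟪g, u⟫) :
    ⨆ u : C, ⟪-G, (u : E) - z⟫ ≤ ⟪-G, v - z⟫ + Metric.diam C * ‖g - G‖ :=
  have : Nonempty C := ⟨⟨v, hv⟩⟩
  ciSup_le fun u => real_inner_neg_sub_le_of_forall_inner_le hC u.2 hv hmin

variable [CompleteSpace E]

theorem le_add_inner_add_of_gradient_lipschitz {F : E → ℝ} {gradF : E → E} {L : ℝ}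
    (hgrad : ∀ z, HasGradientAt F (gradF z) z) {x : E}
    (hL : ∀ z, ‖gradF z - gradF x‖ ≤ L * ‖z - x‖) (y : E) :
    F y ≤ F x + ⟪gradF x, y - x⟫ + L / 2 * ‖y - x‖ ^ 2 := by
  set φ : ℝ → ℝ := fun t =>
    F (x + t • (y - x)) - t * ⟪gradF x, y - x⟫ - L / 2 * t ^ 2 * ‖y - x‖ ^ 2 with hφ
  have hderiv (t : ℝ) : HasDerivAt φ
      (⟪gradF (x + t • (y - x)) - gradF x, y - x⟫ - L * t * ‖y - x‖ ^ 2) t := by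
    have hline : HasDerivAt (fun t : ℝ => x + t • (y - x)) (y - x) t := by
      simpa using ((hasDerivAt_id t).smul_const (y - x)).const_add x
    have hF := (hgrad (x + t • (y - x))).hasFDerivAt.comp_hasDerivAt t hline
    simp only [InnerProductSpace.toDual_apply_apply] at hF
    rw [inner_sub_left]
    exact ((hF.sub ((hasDerivAt_id t).mul_const ⟪gradF x, y - x⟫)).sub
      (((hasDerivAt_pow 2 t).const_mul (L / 2)).mul_const (‖y - x‖ ^ 2))).congr_deriv
      (by simp only [Nat.cast_ofNat, Nat.add_one_sub_one, pow_one]; ring)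
  have hanti : AntitoneOn φ (Set.Icc 0 1) := by
    refine antitoneOn_of_deriv_nonpos (convex_Icc 0 1)
      (fun t _ => (hderiv t).continuousAt.continuousWithinAt)
      (fun t _ => (hderiv t).differentiableAt.differentiableWithinAt) fun t ht => ?_
    rw [interior_Icc] at ht
    rw [(hderiv t).deriv, sub_nonpos]
    calc ⟪gradF (x + t • (y - x)) - gradF x, y - x⟫
        ≤ ‖gradF (x + t • (y - x)) - gradF x‖ * ‖y - x‖ := real_inner_le_norm _ _
      _ ≤ L * ‖x + t • (y - x) - x‖ * ‖y - x‖ := by gcongr; exact hL _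
      _ = L * t * ‖y - x‖ ^ 2 := by
        rw [add_sub_cancel_left, norm_smul, Real.norm_of_nonneg ht.1.le]; ring
  have := hanti (Set.left_mem_Icc.2 zero_le_one) (Set.right_mem_Icc.2 zero_le_one) zero_le_one
  simp only [hφ, zero_smul, add_zero, one_smul, add_sub_cancel] at this
  linarith

end

theorem stmt1_general {d : ℕ} (F : EuclideanSpace ℝ (Fin d) → ℝ)
    (gradF : EuclideanSpace ℝ (Fin d) → EuclideanSpace ℝ (Fin d))
    (L : ℝ) (C : Set (EuclideanSpace ℝ (Fin d))) (R lam η : ℝ)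
    (g v w : EuclideanSpace ℝ (Fin d))
    (hgrad : ∀ x, HasGradientAt F (gradF x) x)
    (hL : ∀ x y, ‖gradF x - gradF y‖ ≤ L * ‖x - y‖)
    (hcomp : IsCompact C)
    (h0 : (0 : EuclideanSpace ℝ (Fin d)) ∈ C) (hR : Metric.diam C = R)
    (hη : 0 < η)
    (hwfeas : lam = 0 ∨ (0 < lam ∧ lam • w ∈ C))
    (hvC : v ∈ C) (hvmin : ∀ u ∈ C, ⟪g, v⟫ ≤ ⟪g, u⟫) :
    F ((1 - lam * η) • w + η • v)
      ≤ F w - η * (⨆ u : C, ⟪-(gradF w), (u : EuclideanSpace ℝ (Fin d)) - lam • w⟫)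
        + η * R * ‖g - gradF w‖ + (L / 2) * η ^ 2 * R ^ 2 := by
  subst hR
  have hlamw : lam • w ∈ C := by
    rcases hwfeas with rfl | ⟨-, h⟩
    · simpa using h0
    · exact h
  have hstep : (1 - lam * η) • w + η • v = w + η • (v - lam • w) := by module
  rw [hstep]
  have hdescent := le_add_inner_add_of_gradient_lipschitz hgrad (fun z => hL z w)
    (w + η • (v - lam • w))
  have hsup := mul_le_mul_of_nonneg_left (ciSup_inner_neg_sub_le_of_forall_inner_le
    hcomp.isBounded (G := gradF w) (z := lam • w) hvC hvmin) hη.le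
  have hquad := mul_le_mul_of_nonneg_left
    (mul_norm_sub_sq_le_mul_diam_sq hL hcomp.isBounded hvC hlamw) (sq_nonneg η)
  rw [add_sub_cancel_left, real_inner_smul_right, norm_smul, Real.norm_of_nonneg hη.le,
    mul_pow, ← neg_neg (gradF w), inner_neg_left] at hdescent
  linarith

/-- Descent rule for one LMO step with the regularized support function
`Ψ(w) = ⨆ u ∈ C, ⟪-∇F(w), u - λ • w⟫`. -/
theorem stmt1 {d : ℕ} (F : EuclideanSpace ℝ (Fin d) → ℝ)
    (gradF : EuclideanSpace ℝ (Fin d) → EuclideanSpace ℝ (Fin d))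
    (L : ℝ) (C : Set (EuclideanSpace ℝ (Fin d))) (R lam η : ℝ)
    (g v w : EuclideanSpace ℝ (Fin d))
    (hgrad : ∀ x, HasGradientAt F (gradF x) x)
    (hL : ∀ x y, ‖gradF x - gradF y‖ ≤ L * ‖x - y‖)
    (hconv : Convex ℝ C) (hcomp : IsCompact C)
    (h0 : (0 : EuclideanSpace ℝ (Fin d)) ∈ C) (hR : Metric.diam C = R)
    (hlam : 0 ≤ lam) (hη : 0 < η)
    (hwfeas : lam = 0 ∨ (0 < lam ∧ lam • w ∈ C))
    (hvC : v ∈ C) (hvmin : ∀ u ∈ C, ⟪g, v⟫ ≤ ⟪g, u⟫) :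
    F ((1 - lam * η) • w + η • v)
      ≤ F w - η * (⨆ u : C, ⟪-(gradF w), (u : EuclideanSpace ℝ (Fin d)) - lam • w⟫)
        + η * R * ‖g - gradF w‖ + (L / 2) * η ^ 2 * R ^ 2 :=
  stmt1_general F gradF L C R lam η g v w hgrad hL hcomp h0 hR hη hwfeas hvC hvmin
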